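/- Let μ be the Gibbs distribution of a permissive spin system (G,q,A_E,A_V) and suppose μ satisfies C-coupling independence for some C > 0. Then μ satisfies total influence decay with rate δ(x) = 2C·2^{−⌈x/(2C)⌉}: for every Λ ⊆ V, all partial configurations σ,τ : Λ → [q] that differ only at a vertex v ∈ Λ, and every integer ℓ > 0, Σ_{u ∈ S_ℓ(v)} d_TV(μ^σ_u, μ^τ_u) ≤ 2C·2^{−⌈ℓ/(2C)⌉}. -/

import Mathlib

/-! Strong induction on `ℓ`, for the total influence on all sites at distance at least `ℓ`
from `v`. If `⌈ℓ/2C⌉ ≤ 1` that influence is at most the Wasserstein distance, so at most `C`.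
Otherwise take a coupling of `μ^σ` and `μ^τ` with expected Hamming distance `< C + 1/2`.
Since the two copies always disagree at `v`, some sphere `S_k(v)` with `1 ≤ k ≤ 2C` carries
expected disagreement `≤ 1/2`. Pin in addition the closed `k`-ball around `v` and move from one
pinning to the other one site at a time: by induction each disagreeing site of `S_k(v)` costs
at most `δ(ℓ - k)`, while the sites inside the ball cost nothing because the pinned sphere
separates them from the far sites (spatial Markov property). Hence the influence is at most
`δ(ℓ - k) / 2 ≤ δ(ℓ)`, the last step because `k ≤ 2C`. -/

open scoped Classical BigOperators

noncomputable section

namespace SpinFormal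

variable {V : Type} [Fintype V] [DecidableEq V] {q : ℕ}

/-- `μ` is a probability distribution on the finite type `Ω`. -/
def IsDist {Ω : Type} [Fintype Ω] (μ : Ω → ℝ) : Prop :=
  (∀ x, 0 ≤ μ x) ∧ ∑ x, μ x = 1

/-- `π` is a coupling of `μ` and `ν`. -/
def IsCoupling {Ω₁ Ω₂ : Type} [Fintype Ω₁] [Fintype Ω₂]
    (π : Ω₁ × Ω₂ → ℝ) (μ : Ω₁ → ℝ) (ν : Ω₂ → ℝ) : Prop :=
  (∀ p, 0 ≤ π p) ∧ (∀ x, ∑ y, π (x, y) = μ x) ∧ (∀ y, ∑ x, π (x, y) = ν y)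

/-- 1-Wasserstein distance with respect to a cost `d`. -/
def Wass {Ω₁ Ω₂ : Type} [Fintype Ω₁] [Fintype Ω₂] (d : Ω₁ → Ω₂ → ℝ)
    (μ : Ω₁ → ℝ) (ν : Ω₂ → ℝ) : ℝ :=
  sInf {c : ℝ | ∃ π : Ω₁ × Ω₂ → ℝ, IsCoupling π μ ν ∧ ∑ p : Ω₁ × Ω₂, π p * d p.1 p.2 = c}

/-- Hamming distance between two configurations, as a real number. -/
def hamming {W : Type} [Fintype W] {α : Type} [DecidableEq α] (σ τ : W → α) : ℝ :=
  ((Finset.univ.filter fun w => σ w ≠ τ w).card : ℝ)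

/-- Total variation distance between two functions on a finite type. -/
def tvDist {X : Type} [Fintype X] (μ ν : X → ℝ) : ℝ := (∑ x, |μ x - ν x|) / 2

/-- The symmetrised edge interaction, as a function on unordered pairs.
When `AE` is symmetric this is just `AE (τ u) (τ v)` on the edge `{u,v}`. -/
def edgeFactor (AE : Fin q → Fin q → ℝ) (τ : V → Fin q) : Sym2 V → ℝ :=
  Sym2.lift ⟨fun u v => (AE (τ u) (τ v) + AE (τ v) (τ u)) / 2, fun u v => by simp [add_comm]⟩

/-- The conditional weight `w^σ(τ)` for the pinning `σ` on `Λ`: products range over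
vertices outside `Λ` and edges with at least one endpoint outside `Λ`. -/
def condWeight (G : SimpleGraph V) (AE : Fin q → Fin q → ℝ) (AV : Fin q → ℝ)
    (Λ : Finset V) (σ τ : V → Fin q) : ℝ :=
  (if ∀ v ∈ Λ, τ v = σ v then (1 : ℝ) else 0)
    * (∏ v ∈ Λᶜ, AV (τ v))
    * ∏ e ∈ Finset.univ.filter
        (fun e : Sym2 V => e ∈ G.edgeSet ∧ ¬ ∀ v ∈ e, v ∈ Λ), edgeFactor AE τ e

/-- The conditional partition function `Z^σ`. -/
def condZ (G : SimpleGraph V) (AE : Fin q → Fin q → ℝ) (AV : Fin q → ℝ)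
    (Λ : Finset V) (σ : V → Fin q) : ℝ :=
  ∑ τ : V → Fin q, condWeight G AE AV Λ σ τ

/-- The conditional Gibbs distribution `μ^σ`. -/
def condDist (G : SimpleGraph V) (AE : Fin q → Fin q → ℝ) (AV : Fin q → ℝ)
    (Λ : Finset V) (σ : V → Fin q) : (V → Fin q) → ℝ :=
  fun τ => condWeight G AE AV Λ σ τ / condZ G AE AV Λ σ

/-- A spin system is permissive if every conditional partition function is positive. -/
def Permissive (G : SimpleGraph V) (AE : Fin q → Fin q → ℝ) (AV : Fin q → ℝ) : Prop :=
  ∀ (Λ : Finset V) (σ : V → Fin q), 0 < condZ G AE AV Λ σ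

/-- Marginal of a distribution on configurations at a single vertex. -/
def marginalAt (μ : (V → Fin q) → ℝ) (u : V) (c : Fin q) : ℝ :=
  ∑ τ : V → Fin q, if τ u = c then μ τ else 0

/-- Marginal probability of a partial configuration `σ` on `Λ`. -/
def margOn (μ : (V → Fin q) → ℝ) (Λ : Finset V) (σ : V → Fin q) : ℝ :=
  ∑ τ : V → Fin q, if ∀ v ∈ Λ, τ v = σ v then μ τ else 0

/-- Two partial configurations on `Λ` differ exactly at the vertex `v ∈ Λ`. -/
def DifferOnlyAt (Λ : Finset V) (σ τ : V → Fin q) (v : V) : Prop :=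
  v ∈ Λ ∧ σ v ≠ τ v ∧ ∀ u ∈ Λ, u ≠ v → σ u = τ u

/-- `C`-coupling independence of the Gibbs distribution of a spin system. -/
def CouplingIndependence (G : SimpleGraph V) (AE : Fin q → Fin q → ℝ)
    (AV : Fin q → ℝ) (C : ℝ) : Prop :=
  ∀ (Λ : Finset V) (σ τ : V → Fin q) (v : V), DifferOnlyAt Λ σ τ v →
    Wass hamming (condDist G AE AV Λ σ) (condDist G AE AV Λ τ) ≤ C

/-- The sphere of radius `ℓ` around `v` in `G` (w.r.t. graph distance). -/
def sphere (G : SimpleGraph V) (v : V) (ℓ : ℕ) : Finset V :=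
  Finset.univ.filter fun u => G.Reachable v u ∧ G.dist v u = ℓ

end SpinFormal

namespace SpinFormal

open Finset

section TotalVariation

variable {X : Type} [Fintype X]

lemma tvDist_nonneg (μ ν : X → ℝ) : 0 ≤ tvDist μ ν := by
  unfold tvDist
  positivity

lemma tvDist_self (μ : X → ℝ) : tvDist μ μ = 0 := by
  simp [tvDist]

lemma tvDist_triangle (μ ν ξ : X → ℝ) : tvDist μ ξ ≤ tvDist μ ν + tvDist ν ξ := by
  unfold tvDist
  rw [← add_div, ← sum_add_distrib]
  gcongr with x
  exact abs_sub_le _ _ _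

lemma tvDist_ite_le [DecidableEq X] (a b : X) :
    tvDist (fun c => if a = c then (1 : ℝ) else 0) (fun c => if b = c then (1 : ℝ) else 0)
      ≤ if a = b then 0 else 1 := by
  by_cases hab : a = b
  · simp [hab, tvDist_self]
  rw [if_neg hab, tvDist, div_le_one two_pos]
  calc ∑ c, |(if a = c then (1 : ℝ) else 0) - if b = c then 1 else 0|
      ≤ ∑ c, ((if a = c then (1 : ℝ) else 0) + if b = c then 1 else 0) := by
        gcongr with c
        exact (abs_sub _ _).trans_eq (by split_ifs <;> norm_num)
    _ = 2 := by
        rw [sum_add_distrib, sum_ite_eq, sum_ite_eq]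
        norm_num

end TotalVariation

section Couplings

variable {Ω₁ Ω₂ : Type} [Fintype Ω₁] [Fintype Ω₂] {π : Ω₁ × Ω₂ → ℝ} {μ : Ω₁ → ℝ} {ν : Ω₂ → ℝ}

lemma IsCoupling.sum_mul_fst (hπ : IsCoupling π μ ν) (f : Ω₁ → ℝ) :
    ∑ p, π p * f p.1 = ∑ x, μ x * f x := by
  rw [Fintype.sum_prod_type]
  simp_rw [← sum_mul, hπ.2.1]

lemma IsCoupling.sum_mul_snd (hπ : IsCoupling π μ ν) (g : Ω₂ → ℝ) :
    ∑ p, π p * g p.2 = ∑ y, ν y * g y := by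
  rw [Fintype.sum_prod_type_right]
  simp_rw [← sum_mul, hπ.2.2]

lemma IsCoupling.apply_ne_zero_left (hπ : IsCoupling π μ ν) {p : Ω₁ × Ω₂} (hp : π p ≠ 0) :
    μ p.1 ≠ 0 := by
  have hle : π p ≤ μ p.1 := hπ.2.1 p.1 ▸ single_le_sum (fun y _ => hπ.1 (p.1, y)) (mem_univ p.2)
  exact (((hπ.1 p).lt_of_ne' hp).trans_le hle).ne'

lemma IsCoupling.apply_ne_zero_right (hπ : IsCoupling π μ ν) {p : Ω₁ × Ω₂} (hp : π p ≠ 0) :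
    ν p.2 ≠ 0 := by
  have hle : π p ≤ ν p.2 := hπ.2.2 p.2 ▸ single_le_sum (fun x _ => hπ.1 (x, p.2)) (mem_univ p.1)
  exact (((hπ.1 p).lt_of_ne' hp).trans_le hle).ne'

lemma IsCoupling.sum_eq_one (hπ : IsCoupling π μ ν) (hμ : ∑ x, μ x = 1) : ∑ p, π p = 1 := by
  simpa [hμ] using hπ.sum_mul_fst (fun _ => 1)

lemma isCoupling_prod (hμ : IsDist μ) (hν : IsDist ν) :
    IsCoupling (fun p => μ p.1 * ν p.2) μ ν :=
  ⟨fun p => mul_nonneg (hμ.1 _) (hν.1 _), fun x => by simp [← mul_sum, hν.2],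
    fun y => by simp [← sum_mul, hμ.2]⟩

lemma tvDist_sum_mul_le {X : Type} [Fintype X] (hπ : IsCoupling π μ ν)
    (f : Ω₁ → X → ℝ) (g : Ω₂ → X → ℝ) :
    tvDist (fun c => ∑ x, μ x * f x c) (fun c => ∑ y, ν y * g y c)
      ≤ ∑ p, π p * tvDist (f p.1) (g p.2) := by
  simp_rw [tvDist, mul_div_assoc', ← sum_div, mul_sum]
  gcongr
  rw [sum_comm]
  gcongr with c
  rw [← hπ.sum_mul_fst, ← hπ.sum_mul_snd, ← sum_sub_distrib]
  refine (abs_sum_le_sum_abs _ _).trans_eq (sum_congr rfl fun p _ => ?_)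
  rw [← mul_sub, abs_mul, abs_of_nonneg (hπ.1 p)]

end Couplings

section Wasserstein

variable {Ω₁ Ω₂ : Type} [Fintype Ω₁] [Fintype Ω₂] {d : Ω₁ → Ω₂ → ℝ} {μ : Ω₁ → ℝ} {ν : Ω₂ → ℝ}

lemma le_wass (hμ : IsDist μ) (hν : IsDist ν) {a : ℝ}
    (h : ∀ π, IsCoupling π μ ν → a ≤ ∑ p, π p * d p.1 p.2) : a ≤ Wass d μ ν :=
  le_csInf ⟨_, _, isCoupling_prod hμ hν, rfl⟩ (by rintro _ ⟨π, hπ, rfl⟩; exact h π hπ)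

lemma exists_coupling_cost_lt (hd : ∀ x y, 0 ≤ d x y) (hμ : IsDist μ) (hν : IsDist ν) {c : ℝ}
    (hW : Wass d μ ν < c) : ∃ π, IsCoupling π μ ν ∧ ∑ p, π p * d p.1 p.2 < c := by
  have hbdd : BddBelow {c : ℝ | ∃ π, IsCoupling π μ ν ∧ ∑ p : Ω₁ × Ω₂, π p * d p.1 p.2 = c} :=
    ⟨0, by rintro _ ⟨π, hπ, rfl⟩; exact sum_nonneg fun p _ => mul_nonneg (hπ.1 p) (hd _ _)⟩
  obtain ⟨_, ⟨π, hπ, rfl⟩, hlt⟩ := (csInf_lt_iff hbdd ⟨_, _, isCoupling_prod hμ hν, rfl⟩).1 hW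
  exact ⟨π, hπ, hlt⟩

end Wasserstein

section Disagreement

variable {W α : Type} [Fintype W] [DecidableEq W] [Fintype α] [DecidableEq α]

def disagreement (π : (W → α) × (W → α) → ℝ) (w : W) : ℝ :=
  ∑ p, π p * if p.1 w = p.2 w then 0 else 1

lemma disagreement_nonneg {π : (W → α) × (W → α) → ℝ} (hπ : ∀ p, 0 ≤ π p) (w : W) :
    0 ≤ disagreement π w :=
  sum_nonneg fun p _ => mul_nonneg (hπ p) (by positivity)

lemma sum_mul_hamming_eq_sum_disagreement (π : (W → α) × (W → α) → ℝ) :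
    ∑ p, π p * hamming p.1 p.2 = ∑ w, disagreement π w := by
  simp_rw [disagreement, hamming, natCast_card_filter, mul_sum, ite_not]
  exact sum_comm

end Disagreement

lemma le_sum_of_le_update {α β : Type*} [DecidableEq α] {F : (α → β) → (α → β) → ℝ}
    (hself : ∀ x, F x x = 0) (htri : ∀ x y z, F x z ≤ F x y + F y z) {s : Finset α}
    {J : α → ℝ} (hJ : ∀ w ∈ s, ∀ z c, F z (Function.update z w c) ≤ J w) {x y : α → β}
    (hxy : ∀ w ∉ s, x w = y w) : F x y ≤ ∑ w ∈ s, J w := by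
  induction s using Finset.induction_on generalizing x with
  | empty => rw [funext fun w => hxy w (notMem_empty w), hself, sum_empty]
  | insert a s ha ih =>
    set x' := Function.update x a (y a)
    have hx' : ∀ w ∉ s, x' w = y w := fun w hw => by
      by_cases hwa : w = a
      · simp [x', hwa]
      · simp only [x', Function.update_of_ne hwa]
        exact hxy w (by simp [hwa, hw])
    rw [sum_insert ha]
    exact (htri x x' y).trans (add_le_add (hJ a (mem_insert_self a s) x (y a))
      (ih (fun w hw => hJ w (mem_insert_of_mem hw)) hx'))

variable {V : Type} {q : ℕ} {G : SimpleGraph V} {AE : Fin q → Fin q → ℝ} {AV : Fin q → ℝ}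

lemma edgeFactor_nonneg (hAEnn : ∀ i j, 0 ≤ AE i j) (τ : V → Fin q) (e : Sym2 V) :
    0 ≤ edgeFactor AE τ e := by
  induction e using Sym2.ind with
  | _ a b => exact div_nonneg (add_nonneg (hAEnn _ _) (hAEnn _ _)) zero_le_two

lemma edgeFactor_congr {τ τ' : V → Fin q} {e : Sym2 V} (h : ∀ w ∈ e, τ w = τ' w) :
    edgeFactor AE τ e = edgeFactor AE τ' e := by
  induction e using Sym2.ind with
  | _ a b =>
    simp only [edgeFactor, Sym2.lift_mk, h a (Sym2.mem_mk_left a b), h b (Sym2.mem_mk_right a b)]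

section Marginals

variable [Fintype V] [DecidableEq V]

lemma marginalAt_eq_sum_mul (μ : (V → Fin q) → ℝ) (u : V) :
    marginalAt μ u = fun c => ∑ x, μ x * if x u = c then 1 else 0 := by
  funext c
  simp [marginalAt]

lemma marginalAt_sum_mul (a : (V → Fin q) → ℝ) (μ : (V → Fin q) → (V → Fin q) → ℝ) (u : V) :
    marginalAt (fun t => ∑ x, a x * μ x t) u = fun c => ∑ x, a x * marginalAt (μ x) u c := by
  funext c
  simp only [marginalAt, mul_sum]
  rw [sum_comm]
  refine sum_congr rfl fun t _ => ?_
  split_ifs <;> simp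

lemma sum_tvDist_marginalAt_le {μ ν : (V → Fin q) → ℝ} {π : (V → Fin q) × (V → Fin q) → ℝ}
    (hπ : IsCoupling π μ ν) (U : Finset V) :
    ∑ u ∈ U, tvDist (marginalAt μ u) (marginalAt ν u) ≤ ∑ p, π p * hamming p.1 p.2 := by
  rw [sum_mul_hamming_eq_sum_disagreement]
  refine (sum_le_sum fun u _ => ?_).trans
    (sum_le_univ_sum_of_nonneg (disagreement_nonneg hπ.1))
  rw [marginalAt_eq_sum_mul, marginalAt_eq_sum_mul]
  exact (tvDist_sum_mul_le hπ _ _).trans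
    (sum_le_sum fun p _ => mul_le_mul_of_nonneg_left (tvDist_ite_le _ _) (hπ.1 p))

end Marginals

section GibbsBasics

variable [Fintype V] [DecidableEq V]

lemma condWeight_nonneg (hAEnn : ∀ i j, 0 ≤ AE i j) (hAVnn : ∀ i, 0 ≤ AV i)
    (Λ : Finset V) (σ τ : V → Fin q) : 0 ≤ condWeight G AE AV Λ σ τ :=
  mul_nonneg (mul_nonneg (by positivity) (prod_nonneg fun _ _ => hAVnn _))
    (prod_nonneg fun e _ => edgeFactor_nonneg hAEnn τ e)

lemma condWeight_eq_zero {Λ : Finset V} {σ τ : V → Fin q} (h : ¬ ∀ w ∈ Λ, τ w = σ w) :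
    condWeight G AE AV Λ σ τ = 0 := by
  simp [condWeight, h]

lemma condWeight_congr_pin {Λ : Finset V} {σ σ' : V → Fin q} (h : ∀ w ∈ Λ, σ w = σ' w) :
    condWeight G AE AV Λ σ = condWeight G AE AV Λ σ' := by
  funext τ
  have hpin : (∀ w ∈ Λ, τ w = σ w) ↔ ∀ w ∈ Λ, τ w = σ' w :=
    forall₂_congr fun w hw => by rw [h w hw]
  simp only [condWeight, hpin]

lemma condDist_congr_pin {Λ : Finset V} {σ σ' : V → Fin q} (h : ∀ w ∈ Λ, σ w = σ' w) :
    condDist G AE AV Λ σ = condDist G AE AV Λ σ' := by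
  unfold condDist condZ
  rw [condWeight_congr_pin h]

lemma condDist_eq_zero {Λ : Finset V} {σ τ : V → Fin q} (h : ¬ ∀ w ∈ Λ, τ w = σ w) :
    condDist G AE AV Λ σ τ = 0 := by
  simp [condDist, condWeight_eq_zero h]

lemma agree_of_condDist_ne_zero {Λ : Finset V} {σ τ : V → Fin q}
    (h : condDist G AE AV Λ σ τ ≠ 0) : ∀ w ∈ Λ, τ w = σ w := by
  by_contra h'
  exact h (condDist_eq_zero h')

lemma condDist_sum_eq_one (hperm : Permissive G AE AV) (Λ : Finset V) (σ : V → Fin q) :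
    ∑ τ, condDist G AE AV Λ σ τ = 1 := by
  unfold condDist
  rw [← sum_div]
  exact div_self (hperm Λ σ).ne'

lemma condDist_isDist (hAEnn : ∀ i j, 0 ≤ AE i j) (hAVnn : ∀ i, 0 ≤ AV i)
    (hperm : Permissive G AE AV) (Λ : Finset V) (σ : V → Fin q) :
    IsDist (condDist G AE AV Λ σ) :=
  ⟨fun τ => div_nonneg (condWeight_nonneg hAEnn hAVnn Λ σ τ) (hperm Λ σ).le,
    condDist_sum_eq_one hperm Λ σ⟩

variable {Λ : Finset V} {σ τ : V → Fin q} {π : (V → Fin q) × (V → Fin q) → ℝ}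

lemma IsCoupling.agree_of_ne_zero
    (hπ : IsCoupling π (condDist G AE AV Λ σ) (condDist G AE AV Λ τ))
    {p : (V → Fin q) × (V → Fin q)} (hp : π p ≠ 0) :
    (∀ w ∈ Λ, p.1 w = σ w) ∧ ∀ w ∈ Λ, p.2 w = τ w :=
  ⟨agree_of_condDist_ne_zero (hπ.apply_ne_zero_left hp),
    agree_of_condDist_ne_zero (hπ.apply_ne_zero_right hp)⟩

lemma disagreement_eq_one (hperm : Permissive G AE AV)
    (hπ : IsCoupling π (condDist G AE AV Λ σ) (condDist G AE AV Λ τ))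
    {v : V} (hv : v ∈ Λ) (hστ : σ v ≠ τ v) : disagreement π v = 1 := by
  rw [← hπ.sum_eq_one (condDist_sum_eq_one hperm Λ σ), disagreement]
  refine sum_congr rfl fun p _ => ?_
  by_cases hp : π p = 0
  · simp [hp]
  obtain ⟨h₁, h₂⟩ := hπ.agree_of_ne_zero hp
  rw [if_neg (by rw [h₁ v hv, h₂ v hv]; exact hστ), mul_one]

lemma one_le_wass_condDist (hAEnn : ∀ i j, 0 ≤ AE i j) (hAVnn : ∀ i, 0 ≤ AV i)
    (hperm : Permissive G AE AV) {v : V} (hdiff : DifferOnlyAt Λ σ τ v) :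
    1 ≤ Wass hamming (condDist G AE AV Λ σ) (condDist G AE AV Λ τ) := by
  refine le_wass (condDist_isDist hAEnn hAVnn hperm Λ σ) (condDist_isDist hAEnn hAVnn hperm Λ τ)
    fun π hπ => ?_
  rw [sum_mul_hamming_eq_sum_disagreement, ← disagreement_eq_one hperm hπ hdiff.1 hdiff.2.1]
  exact single_le_sum (fun w _ => disagreement_nonneg hπ.1 w) (mem_univ v)

end GibbsBasics

section Consistency

variable [Fintype V] [DecidableEq V]

def layerWeight (G : SimpleGraph V) (AE : Fin q → Fin q → ℝ) (AV : Fin q → ℝ)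
    (Λ Λ' : Finset V) (x : V → Fin q) : ℝ :=
  (∏ w ∈ Λᶜ with w ∈ Λ', AV (x w)) *
    ∏ e ∈ (univ.filter fun e : Sym2 V => e ∈ G.edgeSet ∧ ¬ ∀ v ∈ e, v ∈ Λ) with ∀ v ∈ e, v ∈ Λ',
      edgeFactor AE x e

lemma layerWeight_congr {Λ Λ' : Finset V} {x t : V → Fin q} (h : ∀ w ∈ Λ', x w = t w) :
    layerWeight G AE AV Λ Λ' x = layerWeight G AE AV Λ Λ' t := by
  unfold layerWeight
  congr 1
  · exact prod_congr rfl fun w hw => by rw [h w (mem_filter.1 hw).2]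
  · exact prod_congr rfl fun e he => edgeFactor_congr fun w hw => h w ((mem_filter.1 he).2 w hw)

lemma condWeight_eq_layerWeight_mul {Λ Λ' : Finset V} (hΛ : Λ ⊆ Λ') {σ x : V → Fin q}
    (hx : ∀ w ∈ Λ, x w = σ w) :
    condWeight G AE AV Λ σ x = layerWeight G AE AV Λ Λ' x * condWeight G AE AV Λ' x x := by
  have hsites : Λᶜ.filter (fun w => w ∉ Λ') = Λ'ᶜ := by
    ext w
    simp only [mem_filter, mem_compl]
    exact ⟨And.right, fun h => ⟨fun hw => h (hΛ hw), h⟩⟩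
  have hedges : (univ.filter fun e : Sym2 V => e ∈ G.edgeSet ∧ ¬ ∀ v ∈ e, v ∈ Λ).filter
      (fun e => ¬ ∀ v ∈ e, v ∈ Λ') = univ.filter fun e => e ∈ G.edgeSet ∧ ¬ ∀ v ∈ e, v ∈ Λ' := by
    ext e
    simp only [mem_filter, mem_univ, true_and]
    exact ⟨fun h => ⟨h.1.1, h.2⟩, fun h => ⟨⟨h.1, fun h' => h.2 fun v hv => hΛ (h' v hv)⟩, h.2⟩⟩
  unfold condWeight layerWeight
  rw [if_pos hx, if_pos fun _ _ => rfl, ← prod_filter_mul_prod_filter_not Λᶜ (· ∈ Λ'),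
    ← prod_filter_mul_prod_filter_not _ (fun e : Sym2 V => ∀ v ∈ e, v ∈ Λ'), hsites, hedges]
  ring

lemma condDist_eq_margOn_mul (hperm : Permissive G AE AV) {Λ Λ' : Finset V} (hΛ : Λ ⊆ Λ')
    (σ t : V → Fin q) :
    condDist G AE AV Λ σ t = margOn (condDist G AE AV Λ σ) Λ' t * condDist G AE AV Λ' t t := by
  by_cases ht : ∀ w ∈ Λ, t w = σ w
  · have key : ∀ x, (if ∀ w ∈ Λ', x w = t w then condWeight G AE AV Λ σ x else 0)
        = layerWeight G AE AV Λ Λ' t * condWeight G AE AV Λ' t x := by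
      intro x
      split_ifs with hx
      · rw [condWeight_eq_layerWeight_mul hΛ fun w hw => (hx w (hΛ hw)).trans (ht w hw),
          layerWeight_congr hx, condWeight_congr_pin hx]
      · rw [condWeight_eq_zero hx, mul_zero]
    have hmarg : margOn (condDist G AE AV Λ σ) Λ' t
        = layerWeight G AE AV Λ Λ' t * condZ G AE AV Λ' t / condZ G AE AV Λ σ := by
      unfold margOn condDist
      rw [condZ.eq_1 G AE AV Λ' t, mul_sum, ← sum_congr rfl fun x _ => key x, sum_div]
      exact sum_congr rfl fun x _ => by split_ifs <;> simp
    have hZ := (hperm Λ' t).ne'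
    have ht' := key t
    simp only [implies_true, if_true] at ht'
    rw [hmarg]
    unfold condDist
    rw [ht']
    field_simp
  · rw [condDist_eq_zero ht, margOn, sum_eq_zero, zero_mul]
    intro x _
    split_ifs with hx
    · exact condDist_eq_zero fun hxσ => ht fun w hw => (hx w (hΛ hw)).symm.trans (hxσ w hw)
    · rfl

lemma condDist_eq_sum_mul_condDist (hperm : Permissive G AE AV) {Λ Λ' : Finset V}
    (hΛ : Λ ⊆ Λ') (σ t : V → Fin q) :
    condDist G AE AV Λ σ t = ∑ x, condDist G AE AV Λ σ x * condDist G AE AV Λ' x t := by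
  have hterm : ∀ x, condDist G AE AV Λ σ x * condDist G AE AV Λ' x t
      = (if ∀ w ∈ Λ', x w = t w then condDist G AE AV Λ σ x else 0) * condDist G AE AV Λ' t t := by
    intro x
    split_ifs with hx
    · rw [condDist_congr_pin hx]
    · rw [condDist_eq_zero fun h => hx fun w hw => (h w hw).symm, mul_zero, zero_mul]
  rw [sum_congr rfl fun x _ => hterm x, ← sum_mul]
  exact condDist_eq_margOn_mul hperm hΛ σ t

lemma marginalAt_condDist_eq_sum (hperm : Permissive G AE AV) {Λ Λ' : Finset V}
    (hΛ : Λ ⊆ Λ') (σ : V → Fin q) (u : V) :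
    marginalAt (condDist G AE AV Λ σ) u
      = fun c => ∑ x, condDist G AE AV Λ σ x * marginalAt (condDist G AE AV Λ' x) u c := by
  rw [← marginalAt_sum_mul]
  congr 1
  exact funext (condDist_eq_sum_mul_condDist hperm hΛ σ)

end Consistency

section Shielding

variable [DecidableEq V]

def pinSwap (Λ : Finset V) (x y : V → Fin q) : (V → Fin q) ≃ (V → Fin q) :=
  Equiv.piCongrRight fun w => if w ∈ Λ then Equiv.swap (x w) (y w) else Equiv.refl _

lemma pinSwap_apply_of_eq {Λ : Finset V} {x y : V → Fin q} (t : V → Fin q) {w : V}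
    (h : w ∈ Λ → x w = y w) : pinSwap Λ x y t w = t w := by
  by_cases hw : w ∈ Λ <;> simp [pinSwap, hw, h]

variable [Fintype V]

lemma condWeight_pinSwap {Λ : Finset V} {x y : V → Fin q}
    (hbd : ∀ w ∈ Λ, ∀ z ∉ Λ, G.Adj w z → x w = y w) (t : V → Fin q) :
    condWeight G AE AV Λ y (pinSwap Λ x y t) = condWeight G AE AV Λ x t := by
  have hpin : (∀ w ∈ Λ, pinSwap Λ x y t w = y w) ↔ ∀ w ∈ Λ, t w = x w :=
    forall₂_congr fun w hw => by simp [pinSwap, hw, Equiv.swap_apply_eq_iff]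
  have hsite : ∀ w ∈ Λᶜ, pinSwap Λ x y t w = t w := fun w hw =>
    pinSwap_apply_of_eq t fun h => absurd h (mem_compl.1 hw)
  have hedge : ∀ e ∈ univ.filter (fun e : Sym2 V => e ∈ G.edgeSet ∧ ¬ ∀ v ∈ e, v ∈ Λ),
      edgeFactor AE (pinSwap Λ x y t) e = edgeFactor AE t e := by
    refine fun e he => edgeFactor_congr fun w hw => pinSwap_apply_of_eq t fun hwΛ => ?_
    obtain ⟨he, hout⟩ := (mem_filter.1 he).2
    obtain ⟨z, hz, hzΛ⟩ := not_forall₂.1 hout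
    exact hbd w hwΛ z hzΛ (G.adj_iff_exists_edge.2 ⟨fun h => hzΛ (h ▸ hwΛ), e, he, hw, hz⟩)
  unfold condWeight
  rw [if_congr hpin rfl rfl, prod_congr rfl fun w hw => congrArg AV (hsite w hw),
    prod_congr rfl hedge]

/-- Spatial Markov property. `pinSwap Λ x y` is a weight-preserving bijection from the
configurations pinned to `x` onto those pinned to `y`: it moves only sites where the pinnings
differ, and by `hbd` these have all their edges inside `Λ`. -/
lemma marginalAt_condDist_congr {Λ : Finset V} {x y : V → Fin q}
    (hbd : ∀ w ∈ Λ, ∀ z ∉ Λ, G.Adj w z → x w = y w) {u : V} (hu : u ∈ Λ → x u = y u) :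
    marginalAt (condDist G AE AV Λ x) u = marginalAt (condDist G AE AV Λ y) u := by
  have hZ : condZ G AE AV Λ y = condZ G AE AV Λ x := by
    unfold condZ
    rw [← (pinSwap Λ x y).sum_comp]
    simp_rw [condWeight_pinSwap hbd]
  funext c
  unfold marginalAt condDist
  conv_rhs => rw [← (pinSwap Λ x y).sum_comp]
  simp_rw [condWeight_pinSwap hbd, pinSwap_apply_of_eq _ hu, hZ]

end Shielding

section Influence

variable [Fintype V] [DecidableEq V]

variable (G AE AV) in
def influence (Λ U : Finset V) (σ τ : V → Fin q) : ℝ :=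
  ∑ u ∈ U, tvDist (marginalAt (condDist G AE AV Λ σ) u) (marginalAt (condDist G AE AV Λ τ) u)

variable {Λ U : Finset V}

lemma influence_self (σ : V → Fin q) : influence G AE AV Λ U σ σ = 0 := by
  simp [influence, tvDist_self]

lemma influence_triangle (σ ρ τ : V → Fin q) :
    influence G AE AV Λ U σ τ ≤ influence G AE AV Λ U σ ρ + influence G AE AV Λ U ρ τ := by
  rw [influence, influence, influence, ← sum_add_distrib]
  exact sum_le_sum fun u _ => tvDist_triangle _ _ _

lemma influence_mono {U' : Finset V} (hU : U ⊆ U') (σ τ : V → Fin q) :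
    influence G AE AV Λ U σ τ ≤ influence G AE AV Λ U' σ τ :=
  sum_le_sum_of_subset_of_nonneg hU fun _ _ _ => tvDist_nonneg _ _

lemma influence_le_wass (hAEnn : ∀ i j, 0 ≤ AE i j) (hAVnn : ∀ i, 0 ≤ AV i)
    (hperm : Permissive G AE AV) (σ τ : V → Fin q) :
    influence G AE AV Λ U σ τ ≤ Wass hamming (condDist G AE AV Λ σ) (condDist G AE AV Λ τ) :=
  le_wass (condDist_isDist hAEnn hAVnn hperm Λ σ) (condDist_isDist hAEnn hAVnn hperm Λ τ)
    fun _ hπ => sum_tvDist_marginalAt_le hπ U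

lemma influence_le_sum_mul_influence (hperm : Permissive G AE AV) {Λ' : Finset V} (hΛ : Λ ⊆ Λ')
    {σ τ : V → Fin q} {π : (V → Fin q) × (V → Fin q) → ℝ}
    (hπ : IsCoupling π (condDist G AE AV Λ σ) (condDist G AE AV Λ τ)) :
    influence G AE AV Λ U σ τ ≤ ∑ p, π p * influence G AE AV Λ' U p.1 p.2 := by
  simp_rw [influence, mul_sum]
  rw [sum_comm]
  refine sum_le_sum fun u _ => ?_
  rw [marginalAt_condDist_eq_sum hperm hΛ σ, marginalAt_condDist_eq_sum hperm hΛ τ]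
  exact tvDist_sum_mul_le hπ _ _

end Influence

section Distances

lemma edist_le_add_one_of_adj {v w z : V} (h : G.Adj w z) : G.edist v z ≤ G.edist v w + 1 :=
  G.edist_triangle.trans_eq (by rw [SimpleGraph.edist_eq_one_iff_adj.2 h])

variable [Fintype V] [DecidableEq V]

variable (G) in
def closedBall (v : V) (k : ℕ) : Finset V :=
  univ.filter fun u => G.edist v u ≤ k

variable (G) in
def farFrom (v : V) (ℓ : ℕ) : Finset V :=
  univ.filter fun u => ℓ ≤ G.edist v u

lemma mem_sphere_iff {v u : V} {ℓ : ℕ} : u ∈ sphere G v ℓ ↔ G.edist v u = ℓ := by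
  simp only [sphere, mem_filter, mem_univ, true_and]
  constructor
  · rintro ⟨h, rfl⟩
    exact h.coe_dist_eq_edist.symm
  · intro h
    have hr : G.Reachable v u := SimpleGraph.reachable_of_edist_ne_top (by simp [h])
    exact ⟨hr, by exact_mod_cast hr.coe_dist_eq_edist.trans h⟩

variable (G) in
lemma sphere_zero (v : V) : sphere G v 0 = {v} := by
  ext u
  rw [mem_sphere_iff, mem_singleton, Nat.cast_zero, SimpleGraph.edist_eq_zero_iff, eq_comm]

lemma sphere_subset_closedBall (v : V) (k : ℕ) : sphere G v k ⊆ closedBall G v k :=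
  fun u hu => by simp [closedBall, mem_sphere_iff.1 hu]

lemma sphere_subset_farFrom (v : V) (ℓ : ℕ) : sphere G v ℓ ⊆ farFrom G v ℓ :=
  fun u hu => by simp [farFrom, mem_sphere_iff.1 hu]

lemma farFrom_subset_farFrom {v w : V} {k : ℕ} (hw : w ∈ sphere G v k) (ℓ : ℕ) :
    farFrom G v ℓ ⊆ farFrom G w (ℓ - k) := by
  intro u hu
  simp only [farFrom, mem_filter, mem_univ, true_and] at hu ⊢
  have htri : G.edist v u ≤ G.edist v w + G.edist w u := G.edist_triangle
  rw [mem_sphere_iff.1 hw] at htri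
  rw [ENat.natCast_sub, tsub_le_iff_left]
  exact hu.trans htri

variable (G) in
lemma sum_sum_sphere_le {d : V → ℝ} (hd : ∀ w, 0 ≤ d w) (v : V) (R : Finset ℕ) :
    ∑ k ∈ R, ∑ w ∈ sphere G v k, d w ≤ ∑ w, d w := by
  rw [← sum_biUnion]
  · exact sum_le_univ_sum_of_nonneg hd
  · intro k _ k' _ hkk'
    rw [Function.onFun, disjoint_left]
    intro w h h'
    rw [mem_sphere_iff] at h h'
    exact hkk' (by exact_mod_cast h.symm.trans h')

end Distances

section DecayRate

def decayRate (C : ℝ) (ℓ : ℕ) : ℝ := 2 * C * (2 : ℝ) ^ (-(⌈(ℓ : ℝ) / (2 * C)⌉ : ℤ))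

variable {C : ℝ}

lemma decayRate_nonneg (hC : 0 ≤ C) (ℓ : ℕ) : 0 ≤ decayRate C ℓ := by
  unfold decayRate
  positivity

lemma le_decayRate (hC : 0 ≤ C) {ℓ : ℕ} (h : ⌈(ℓ : ℝ) / (2 * C)⌉ ≤ 1) : C ≤ decayRate C ℓ := by
  have hpow : (1 / 2 : ℝ) ≤ 2 ^ (-(⌈(ℓ : ℝ) / (2 * C)⌉ : ℤ)) :=
    calc (1 / 2 : ℝ) = 2 ^ (-1 : ℤ) := by norm_num
      _ ≤ _ := zpow_le_zpow_right₀ one_le_two (by omega)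
  unfold decayRate
  nlinarith

lemma decayRate_sub_le (hC : 0 < C) {k : ℕ} (hk : (k : ℝ) ≤ 2 * C) (ℓ : ℕ) :
    decayRate C (ℓ - k) ≤ 2 * decayRate C ℓ := by
  have hceil : ⌈(ℓ : ℝ) / (2 * C)⌉ - 1 ≤ ⌈((ℓ - k : ℕ) : ℝ) / (2 * C)⌉ := by
    rw [← Int.ceil_sub_one]
    refine Int.ceil_mono ?_
    rw [div_sub_one (by positivity), div_le_div_iff_of_pos_right (by positivity)]
    have : (ℓ : ℝ) ≤ ((ℓ - k : ℕ) : ℝ) + k := by exact_mod_cast le_tsub_add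
    linarith
  unfold decayRate
  calc 2 * C * (2 : ℝ) ^ (-⌈((ℓ - k : ℕ) : ℝ) / (2 * C)⌉)
      ≤ 2 * C * 2 ^ (-(⌈(ℓ : ℝ) / (2 * C)⌉ - 1)) := by
        gcongr
        exact one_le_two
    _ = 2 * (2 * C * 2 ^ (-⌈(ℓ : ℝ) / (2 * C)⌉)) := by
        rw [neg_sub, zpow_sub₀ two_ne_zero, zpow_one, zpow_neg]
        ring

end DecayRate

section Recursion

variable [Fintype V] [DecidableEq V]

variable {Λ : Finset V} {v : V} {k ℓ : ℕ} {B : ℝ}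

/-- A site of the sphere is handled by `hB`. Any other site allowed by `hw` is either unpinned
or lies in the open `k`-ball, and then the pinned sphere separates it from `farFrom G v ℓ`. -/
lemma influence_update_le (hkℓ : k < ℓ) (hB0 : 0 ≤ B)
    (hB : ∀ Λ' σ' τ' w, DifferOnlyAt Λ' σ' τ' w →
      influence G AE AV Λ' (farFrom G w (ℓ - k)) σ' τ' ≤ B)
    {w : V} (hw : w ∈ Λ → w = v) (z : V → Fin q) (c : Fin q) :
    influence G AE AV (Λ ∪ closedBall G v k) (farFrom G v ℓ) z (Function.update z w c)
      ≤ if w ∈ sphere G v k then B else 0 := by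
  split_ifs with hwS
  · by_cases hc : c = z w
    · rw [hc, Function.update_eq_self, influence_self]
      exact hB0
    refine (influence_mono (farFrom_subset_farFrom hwS ℓ) _ _).trans (hB _ _ _ _ ⟨?_, ?_, ?_⟩)
    · exact mem_union_right _ (sphere_subset_closedBall v k hwS)
    · simpa [eq_comm] using hc
    · exact fun u _ hu => (Function.update_of_ne hu _ _).symm
  have hwk : w ∈ Λ ∪ closedBall G v k → G.edist v w < k := by
    intro h
    refine lt_of_le_of_ne ?_ fun h' => hwS (mem_sphere_iff.2 h')
    rcases mem_union.1 h with h | h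
    · simp [hw h]
    · exact (mem_filter.1 h).2
  refine le_of_eq (sum_eq_zero fun u hu => ?_)
  rw [marginalAt_condDist_congr (AE := AE) (AV := AV) _ _, tvDist_self]
  · intro w' hw' z' hz' hadj
    refine (Function.update_of_ne (fun hww' => hz' ?_) _ _).symm
    subst hww'
    exact mem_union_right _ (mem_filter.2 ⟨mem_univ _,
      (edist_le_add_one_of_adj hadj).trans (Order.add_one_le_of_lt (hwk hw'))⟩)
  · intro hu'
    refine (Function.update_of_ne (fun huw => ?_) _ _).symm
    subst huw
    have hfar : (ℓ : ℕ∞) ≤ G.edist v u := (mem_filter.1 hu).2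
    have : (ℓ : ℕ∞) < k := hfar.trans_lt (hwk hu')
    exact absurd (by exact_mod_cast this) hkℓ.not_gt

lemma influence_farFrom_le_of_sphere (hperm : Permissive G AE AV) {σ τ : V → Fin q}
    (hdiff : DifferOnlyAt Λ σ τ v) {π : (V → Fin q) × (V → Fin q) → ℝ}
    (hπ : IsCoupling π (condDist G AE AV Λ σ) (condDist G AE AV Λ τ))
    (hkℓ : k < ℓ) (hB0 : 0 ≤ B)
    (hB : ∀ Λ' σ' τ' w, DifferOnlyAt Λ' σ' τ' w →
      influence G AE AV Λ' (farFrom G w (ℓ - k)) σ' τ' ≤ B) :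
    influence G AE AV Λ (farFrom G v ℓ) σ τ ≤ B * ∑ w ∈ sphere G v k, disagreement π w := by
  have hpair : ∀ p, π p ≠ 0 →
      influence G AE AV (Λ ∪ closedBall G v k) (farFrom G v ℓ) p.1 p.2
        ≤ ∑ w ∈ sphere G v k, B * if p.1 w = p.2 w then 0 else 1 := by
    intro p hp
    obtain ⟨h₁, h₂⟩ := hπ.agree_of_ne_zero hp
    have hΛ : ∀ w, p.1 w ≠ p.2 w → w ∈ Λ → w = v := fun w hw hwΛ => by_contra fun hwv =>
      hw ((h₁ w hwΛ).trans ((hdiff.2.2 w hwΛ hwv).trans (h₂ w hwΛ).symm))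
    refine (le_sum_of_le_update influence_self influence_triangle
      (s := univ.filter fun w => p.1 w ≠ p.2 w)
      (fun w hw => influence_update_le hkℓ hB0 hB (hΛ w (mem_filter.1 hw).2))
      (fun w hw => by simpa using hw)).trans_eq ?_
    rw [sum_filter, ← sum_subset (subset_univ (sphere G v k))]
    · refine sum_congr rfl fun w _ => ?_
      split_ifs <;> simp_all
    · intro w _ hw
      simp [hw]
  calc influence G AE AV Λ (farFrom G v ℓ) σ τ
      ≤ ∑ p, π p * influence G AE AV (Λ ∪ closedBall G v k) (farFrom G v ℓ) p.1 p.2 :=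
        influence_le_sum_mul_influence hperm subset_union_left hπ
    _ ≤ ∑ p, π p * ∑ w ∈ sphere G v k, B * if p.1 w = p.2 w then 0 else 1 := by
        refine sum_le_sum fun p _ => ?_
        by_cases hp : π p = 0
        · simp [hp]
        · exact mul_le_mul_of_nonneg_left (hpair p hp) (hπ.1 p)
    _ = B * ∑ w ∈ sphere G v k, disagreement π w := by
        simp_rw [disagreement, mul_sum]
        rw [sum_comm]
        exact sum_congr rfl fun w _ => sum_congr rfl fun p _ => by ring

/-- Since the disagreement at `v` is `1` and the expected Hamming distance is `< C + 1/2`,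
the disagreements on the spheres of radius `1, …, ⌊2C⌋` add up to less than `⌊2C⌋ / 2`. -/
lemma exists_sphere_disagreement_le_half (hperm : Permissive G AE AV) {σ τ : V → Fin q}
    (hdiff : DifferOnlyAt Λ σ τ v) {π : (V → Fin q) × (V → Fin q) → ℝ}
    (hπ : IsCoupling π (condDist G AE AV Λ σ) (condDist G AE AV Λ τ)) {C : ℝ} (hC : 1 ≤ C)
    (hcost : ∑ p, π p * hamming p.1 p.2 < C + 1 / 2) :
    ∃ k : ℕ, 1 ≤ k ∧ (k : ℝ) ≤ 2 * C ∧ ∑ w ∈ sphere G v k, disagreement π w ≤ 1 / 2 := by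
  set K := ⌊2 * C⌋₊
  have hK : 2 * C - 1 < K := Nat.sub_one_lt_floor _
  have hK1 : 1 ≤ K := Nat.le_floor (by push_cast; linarith)
  have hsum : ∑ k ∈ Icc 1 K, ∑ w ∈ sphere G v k, disagreement π w
      ≤ ∑ _k ∈ Icc 1 K, (1 / 2 : ℝ) := by
    have h := sum_sum_sphere_le G (disagreement_nonneg hπ.1) v (insert 0 (Icc 1 K))
    rw [sum_insert (by simp), sphere_zero G, sum_singleton,
      disagreement_eq_one hperm hπ hdiff.1 hdiff.2.1, ← sum_mul_hamming_eq_sum_disagreement] at h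
    rw [sum_const, Nat.card_Icc, nsmul_eq_mul, Nat.add_sub_cancel]
    linarith
  obtain ⟨k, hk, hle⟩ := exists_le_of_sum_le (nonempty_Icc.2 hK1) hsum
  obtain ⟨hk1, hkK⟩ := mem_Icc.1 hk
  exact ⟨k, hk1, (Nat.cast_le.2 hkK).trans (Nat.floor_le (by linarith)), hle⟩

theorem influence_farFrom_le_decayRate (hAEnn : ∀ i j, 0 ≤ AE i j) (hAVnn : ∀ i, 0 ≤ AV i)
    (hperm : Permissive G AE AV) {C : ℝ} (hC : 1 ≤ C) (hCI : CouplingIndependence G AE AV C)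
    (ℓ : ℕ) : ∀ (Λ : Finset V) (σ τ : V → Fin q) (v : V), DifferOnlyAt Λ σ τ v →
      influence G AE AV Λ (farFrom G v ℓ) σ τ ≤ decayRate C ℓ := by
  induction ℓ using Nat.strong_induction_on with
  | _ ℓ ih =>
  intro Λ σ τ v hdiff
  have hW := hCI Λ σ τ v hdiff
  by_cases hn : ⌈(ℓ : ℝ) / (2 * C)⌉ ≤ 1
  · exact (influence_le_wass hAEnn hAVnn hperm σ τ).trans
      (hW.trans (le_decayRate (by linarith) hn))
  have hℓ : 2 * C < ℓ := by
    have h := Int.lt_ceil.1 (not_le.1 hn)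
    rwa [Int.cast_one, one_lt_div (by linarith)] at h
  obtain ⟨π, hπ, hcost⟩ := exists_coupling_cost_lt (fun _ _ => Nat.cast_nonneg _)
    (condDist_isDist hAEnn hAVnn hperm Λ σ) (condDist_isDist hAEnn hAVnn hperm Λ τ)
    (hW.trans_lt (by linarith : C < C + 1 / 2))
  obtain ⟨k, hk1, hk2C, hα⟩ := exists_sphere_disagreement_le_half hperm hdiff hπ hC hcost
  have hkℓ : k < ℓ := by exact_mod_cast hk2C.trans_lt hℓ
  have hδ := decayRate_nonneg (by linarith : 0 ≤ C) (ℓ - k)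
  calc influence G AE AV Λ (farFrom G v ℓ) σ τ
      ≤ decayRate C (ℓ - k) * ∑ w ∈ sphere G v k, disagreement π w :=
        influence_farFrom_le_of_sphere hperm hdiff hπ hkℓ hδ
          fun Λ' σ' τ' w h => ih (ℓ - k) (by omega) Λ' σ' τ' w h
    _ ≤ decayRate C (ℓ - k) * (1 / 2) := by gcongr
    _ ≤ decayRate C ℓ := by linarith [decayRate_sub_le (by linarith : 0 < C) hk2C ℓ]

end Recursion

end SpinFormal

open SpinFormal

theorem total_influence_decay_of_coupling_independence_general
    {V : Type} [Fintype V] [DecidableEq V] {q : ℕ}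
    (G : SimpleGraph V) (AE : Fin q → Fin q → ℝ) (AV : Fin q → ℝ)
    (hAEnn : ∀ i j, 0 ≤ AE i j) (hAVnn : ∀ i, 0 ≤ AV i)
    (hperm : Permissive G AE AV)
    (C : ℝ) (hCI : CouplingIndependence G AE AV C)
    (Λ : Finset V) (σ τ : V → Fin q) (v : V) (hdiff : DifferOnlyAt Λ σ τ v)
    (ℓ : ℕ) :
    ∑ u ∈ sphere G v ℓ,
        tvDist (marginalAt (condDist G AE AV Λ σ) u)
               (marginalAt (condDist G AE AV Λ τ) u)
      ≤ 2 * C * (2 : ℝ) ^ (-(⌈(ℓ : ℝ) / (2 * C)⌉ : ℤ)) := by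
  have hC : 1 ≤ C := (one_le_wass_condDist hAEnn hAVnn hperm hdiff).trans (hCI Λ σ τ v hdiff)
  exact (influence_mono (sphere_subset_farFrom v ℓ) σ τ).trans
    (influence_farFrom_le_decayRate hAEnn hAVnn hperm hC hCI ℓ Λ σ τ v hdiff)

/-- coupling independence implies total influence decay with rate
`δ(ℓ) = 2C·2^{-⌈ℓ/(2C)⌉}`. -/
theorem total_influence_decay_of_coupling_independence
    {V : Type} [Fintype V] [DecidableEq V] {q : ℕ}
    (G : SimpleGraph V) (AE : Fin q → Fin q → ℝ) (AV : Fin q → ℝ)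
    (hq : 2 ≤ q)
    (hAEsymm : ∀ i j, AE i j = AE j i)
    (hAEnn : ∀ i j, 0 ≤ AE i j) (hAVnn : ∀ i, 0 ≤ AV i)
    (hperm : Permissive G AE AV)
    (C : ℝ) (hC : 0 < C) (hCI : CouplingIndependence G AE AV C)
    (Λ : Finset V) (σ τ : V → Fin q) (v : V) (hdiff : DifferOnlyAt Λ σ τ v)
    (ℓ : ℕ) (hℓ : 0 < ℓ) :
    ∑ u ∈ sphere G v ℓ,
        tvDist (marginalAt (condDist G AE AV Λ σ) u)
               (marginalAt (condDist G AE AV Λ τ) u)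
      ≤ 2 * C * (2 : ℝ) ^ (-(⌈(ℓ : ℝ) / (2 * C)⌉ : ℤ)) :=
  total_influence_decay_of_coupling_independence_general G AE AV hAEnn hAVnn hperm C hCI Λ σ τ v
    hdiff ℓ
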